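/- Let μ > 0 and λ be real constants with λ + 2μ > 0 (so that λ + 3μ > 0), and set c := (λ+μ)/(λ+3μ). Let Ω ⊆ ℝ² be a connected open set that is symmetric with respect to Γ := {x₁ = 0}, i.e. R(Ω) = Ω where R(x₁,x₂) := (−x₁,x₂). Let γ be a nonempty connected component of Ω ∩ Γ. Let u : Ω → ℝ² be real-analytic with 𝓛₀u := μΔu + (λ+μ)∇(div u) = 0 on Ω and u = 0 on γ. Define D̃₀u(x) := (u₁(x), −u₂(x)) + c x₁² Δu(x) + 2c x₁ (∂₂u₂(x), −∂₂u₁(x)). Then D̃₀u itself solves the same boundary value problem: 𝓛₀(D̃₀u) = 0 on Ω and D̃₀u = 0 on γ. -/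

import Mathlib

/-!
Both claims are local identities. On `γ ⊆ {x₁ = 0}` every term of `D̃₀u` other than `±uᵢ` carries
a factor `x₁`, so `D̃₀u` vanishes with `u`. In the interior, `𝓛₀ ∘ D̃₀ = D̃₀' ∘ 𝓛₀` for an explicit
second-order operator `D̃₀'`. This only uses the Leibniz rule, `∂₁x₁ = 1`, `∂₂x₁ = 0`,
`∂₁∂₂ = ∂₂∂₁` and `c (λ + 3μ) = λ + μ`, so it holds in any commutative algebra with two commuting
derivations and an element `x₁` with these derivatives; real-analytic functions on the open set
`Ω` form such an algebra.
-/

noncomputable section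

open Real

/-- The Euclidean plane. -/
abbrev E2 : Type := EuclideanSpace ℝ (Fin 2)

/-- Partial derivative `∂ᵢf` (with `i = 0` corresponding to `∂₁`). -/
noncomputable def pd (i : Fin 2) (f : E2 → ℝ) (x : E2) : ℝ :=
  fderiv ℝ f x (EuclideanSpace.single i 1)

/-- Laplacian of a scalar function. -/
noncomputable def lap (f : E2 → ℝ) (x : E2) : ℝ :=
  pd 0 (pd 0 f) x + pd 1 (pd 1 f) x

/-- Divergence `div u = ∂₁u₁ + ∂₂u₂`. -/
noncomputable def divg (u : E2 → Fin 2 → ℝ) (x : E2) : ℝ :=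
  pd 0 (fun y => u y 0) x + pd 1 (fun y => u y 1) x

/-- The Lamé operator `𝓛₀u = μΔu + (λ+μ)∇(div u)`, `i`-th component. -/
noncomputable def lame (μ lam : ℝ) (u : E2 → Fin 2 → ℝ) (x : E2) (i : Fin 2) : ℝ :=
  μ * lap (fun y => u y i) x + (lam + μ) * pd i (divg u) x

open Set

section LameAlgebra

variable {R A : Type*} [CommRing R] [CommRing A] [Algebra R A]
  (d : Fin 2 → Derivation R A A)

def lapOp (a : A) : A := d 0 (d 0 a) + d 1 (d 1 a)

def lameOp (μ lam : R) (u : Fin 2 → A) (i : Fin 2) : A :=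
  μ • lapOp d (u i) + (lam + μ) • d i (d 0 (u 0) + d 1 (u 1))

def reflectionOp (c : R) (X : A) (u : Fin 2 → A) : Fin 2 → A :=
  ![u 0 + c • (X ^ 2 * lapOp d (u 0)) + (2 * c) • (X * d 1 (u 1)),
    -u 1 + c • (X ^ 2 * lapOp d (u 1)) - (2 * c) • (X * d 1 (u 0))]

def reflectionOp' (c : R) (X : A) (v : Fin 2 → A) : Fin 2 → A :=
  ![(1 + 2 * c) • v 0 + (4 * c) • (X * d 0 (v 0)) + (2 * c) • (X * d 1 (v 1))
      + c • (X ^ 2 * lapOp d (v 0)),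
    (2 * c - 1) • v 1 + (4 * c) • (X * d 0 (v 1)) - (2 * c) • (X * d 1 (v 0))
      + c • (X ^ 2 * lapOp d (v 1))]

theorem lameOp_reflectionOp {μ lam c : R} (hc : c * (lam + 3 * μ) = lam + μ) {X : A}
    (hX₀ : d 0 X = 1) (hX₁ : d 1 X = 0) (hcomm : ∀ a, d 1 (d 0 a) = d 0 (d 1 a))
    (u : Fin 2 → A) :
    lameOp d μ lam (reflectionOp d c X u) = reflectionOp' d c X (lameOp d μ lam u) := by
  have hc' := congrArg (algebraMap R A) hc
  simp only [map_mul, map_add, map_ofNat] at hc'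
  ext i
  fin_cases i <;>
  simp only [lameOp, reflectionOp, reflectionOp', lapOp, Fin.zero_eta, Fin.mk_one, Fin.isValue,
    Matrix.cons_val_zero, Matrix.cons_val_one, sq, map_add, map_sub, map_neg, Derivation.map_smul,
    Derivation.leibniz, hX₀, hX₁, hcomm, smul_eq_mul, mul_one, mul_zero, add_zero,
    zero_add] <;>
  simp only [Algebra.smul_def, map_mul, map_add, map_sub, map_one, map_ofNat]
  · linear_combination (2 * d 0 (d 1 (u 1))) * hc'
  · linear_combination (-2 * d 0 (d 1 (u 0))) * hc'

theorem lameOp_reflectionOp_eq_zero {μ lam c : R} (hc : c * (lam + 3 * μ) = lam + μ) {X : A}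
    (hX₀ : d 0 X = 1) (hX₁ : d 1 X = 0) (hcomm : ∀ a, d 1 (d 0 a) = d 0 (d 1 a))
    {u : Fin 2 → A} (hu : lameOp d μ lam u = 0) :
    lameOp d μ lam (reflectionOp d c X u) = 0 := by
  rw [lameOp_reflectionOp d hc hX₀ hX₁ hcomm, hu]
  ext i
  fin_cases i <;> simp [reflectionOp', lapOp]

end LameAlgebra

section AnalyticFunctionsOn

variable {E : Type*} [NormedAddCommGroup E] [NormedSpace ℝ E] {Ω : Set E} {f g : E → ℝ}

/-- Functions on the subtype `Ω` rather than on `E`: the derivations below then satisfy the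
Leibniz rule exactly, with no junk values off `Ω` to control. -/
def analyticFunctionsOn (Ω : Set E) : Subalgebra ℝ (Ω → ℝ) where
  carrier := {g | ∃ f : E → ℝ, AnalyticOnNhd ℝ f Ω ∧ Ω.domRestrict f = g}
  mul_mem' := by
    rintro _ _ ⟨f, hf, rfl⟩ ⟨g, hg, rfl⟩
    exact ⟨f * g, hf.mul hg, rfl⟩
  add_mem' := by
    rintro _ _ ⟨f, hf, rfl⟩ ⟨g, hg, rfl⟩
    exact ⟨f + g, hf.add hg, rfl⟩
  algebraMap_mem' r := ⟨fun _ => r, analyticOnNhd_const, rfl⟩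

namespace AnalyticOnNhd

def restrictAnalytic (hf : AnalyticOnNhd ℝ f Ω) : analyticFunctionsOn Ω :=
  ⟨Ω.domRestrict f, f, hf, rfl⟩

@[simp]
theorem coe_restrictAnalytic (hf : AnalyticOnNhd ℝ f Ω) (x : Ω) :
    (hf.restrictAnalytic : Ω → ℝ) x = f x := rfl

theorem restrictAnalytic_congr (hf : AnalyticOnNhd ℝ f Ω) (hg : AnalyticOnNhd ℝ g Ω)
    (h : EqOn f g Ω) : hf.restrictAnalytic = hg.restrictAnalytic :=
  Subtype.ext <| funext fun x => h x.2

theorem restrictAnalytic_add (hf : AnalyticOnNhd ℝ f Ω) (hg : AnalyticOnNhd ℝ g Ω) :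
    (hf.add hg).restrictAnalytic = hf.restrictAnalytic + hg.restrictAnalytic := rfl

theorem restrictAnalytic_mul (hf : AnalyticOnNhd ℝ f Ω) (hg : AnalyticOnNhd ℝ g Ω) :
    (hf.mul hg).restrictAnalytic = hf.restrictAnalytic * hg.restrictAnalytic := rfl

theorem restrictAnalytic_smul (hf : AnalyticOnNhd ℝ f Ω) (r : ℝ) :
    (hf.const_smul (c := r)).restrictAnalytic = r • hf.restrictAnalytic := rfl

theorem lineDeriv (hf : AnalyticOnNhd ℝ f Ω) (v : E) :
    AnalyticOnNhd ℝ (fun x => fderiv ℝ f x v) Ω := fun x hx =>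
  (ContinuousLinearMap.apply ℝ ℝ v).analyticAt _ |>.comp (hf.fderiv x hx)

end AnalyticOnNhd

theorem exists_restrictAnalytic_eq (a : analyticFunctionsOn Ω) :
    ∃ f, ∃ hf : AnalyticOnNhd ℝ f Ω, hf.restrictAnalytic = a := by
  obtain ⟨f, hf, hfa⟩ := a.2
  exact ⟨f, hf, Subtype.ext hfa⟩

def lineDerivOn (v : E) (a : analyticFunctionsOn Ω) : analyticFunctionsOn Ω :=
  (a.2.choose_spec.1.lineDeriv v).restrictAnalytic

theorem lineDerivOn_restrictAnalytic (hΩ : IsOpen Ω) (hf : AnalyticOnNhd ℝ f Ω) (v : E) :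
    lineDerivOn v hf.restrictAnalytic = (hf.lineDeriv v).restrictAnalytic := by
  have hext := hf.restrictAnalytic.2.choose_spec
  refine AnalyticOnNhd.restrictAnalytic_congr _ _ fun x hx => ?_
  have hfx : _ =ᶠ[nhds x] f :=
    Filter.eventuallyEq_of_mem (hΩ.mem_nhds hx) fun y hy => congrFun hext.2 ⟨y, hy⟩
  simp only [hfx.fderiv_eq]

theorem coe_lineDerivOn (hΩ : IsOpen Ω) (hf : AnalyticOnNhd ℝ f Ω) (v : E) (x : Ω) :
    (lineDerivOn v hf.restrictAnalytic : Ω → ℝ) x = fderiv ℝ f x v := by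
  rw [lineDerivOn_restrictAnalytic hΩ]; rfl

def lineDerivation (hΩ : IsOpen Ω) (v : E) :
    Derivation ℝ (analyticFunctionsOn Ω) (analyticFunctionsOn Ω) := by
  refine Derivation.mk' ⟨⟨lineDerivOn v, fun a b => ?_⟩, fun r a => ?_⟩ fun a b => ?_
  all_goals
    obtain ⟨f, hf, rfl⟩ := exists_restrictAnalytic_eq a
    ext x
  · obtain ⟨g, hg, rfl⟩ := exists_restrictAnalytic_eq b
    rw [← AnalyticOnNhd.restrictAnalytic_add]
    simp [coe_lineDerivOn hΩ, fderiv_add (hf x x.2).differentiableAt (hg x x.2).differentiableAt]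
  · rw [← AnalyticOnNhd.restrictAnalytic_smul]
    simp [coe_lineDerivOn hΩ, fderiv_const_smul (hf x x.2).differentiableAt]
  · obtain ⟨g, hg, rfl⟩ := exists_restrictAnalytic_eq b
    rw [← AnalyticOnNhd.restrictAnalytic_mul]
    simp [coe_lineDerivOn hΩ, fderiv_fun_mul (hf x x.2).differentiableAt (hg x x.2).differentiableAt]

theorem analyticOnNhd_of_forall_coe_eq (hΩ : IsOpen Ω) (a : analyticFunctionsOn Ω)
    (h : ∀ x : Ω, (a : Ω → ℝ) x = g x) : AnalyticOnNhd ℝ g Ω := by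
  obtain ⟨f, hf, rfl⟩ := exists_restrictAnalytic_eq a
  exact hf.congr hΩ fun x hx => h ⟨x, hx⟩

theorem lineDerivation_restrictAnalytic (hΩ : IsOpen Ω) (hf : AnalyticOnNhd ℝ f Ω) (v : E) :
    lineDerivation hΩ v hf.restrictAnalytic = (hf.lineDeriv v).restrictAnalytic :=
  lineDerivOn_restrictAnalytic hΩ hf v

theorem lineDerivation_restrictAnalytic_clm (hΩ : IsOpen Ω) (ℓ : E →L[ℝ] ℝ) (v : E) :
    lineDerivation hΩ v (ℓ.analyticOnNhd Ω).restrictAnalytic = algebraMap ℝ _ (ℓ v) := by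
  rw [lineDerivation_restrictAnalytic]
  ext x
  simp [ContinuousLinearMap.fderiv]

theorem lineDerivation_comm (hΩ : IsOpen Ω) (v w : E) (a : analyticFunctionsOn Ω) :
    lineDerivation hΩ v (lineDerivation hΩ w a) = lineDerivation hΩ w (lineDerivation hΩ v a) := by
  obtain ⟨f, hf, rfl⟩ := exists_restrictAnalytic_eq a
  simp only [lineDerivation_restrictAnalytic]
  refine AnalyticOnNhd.restrictAnalytic_congr _ _ fun x hx => ?_
  have hd := (hf.fderiv x hx).differentiableAt
  simpa [fderiv_clm_apply hd (differentiableAt_const _)] using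
    (hf x hx).contDiffAt.isSymmSndFDerivAt_of_omega v w

end AnalyticFunctionsOn

section LamePlane

variable {Ω : Set E2} {f : E2 → ℝ}

theorem AnalyticOnNhd.pd (hf : AnalyticOnNhd ℝ f Ω) (i : Fin 2) : AnalyticOnNhd ℝ (pd i f) Ω :=
  hf.lineDeriv _

def partialDerivation (hΩ : IsOpen Ω) (i : Fin 2) :
    Derivation ℝ (analyticFunctionsOn Ω) (analyticFunctionsOn Ω) :=
  lineDerivation hΩ (EuclideanSpace.single i 1)

theorem partialDerivation_restrictAnalytic (hΩ : IsOpen Ω) (hf : AnalyticOnNhd ℝ f Ω)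
    (i : Fin 2) : partialDerivation hΩ i hf.restrictAnalytic = (hf.pd i).restrictAnalytic :=
  lineDerivation_restrictAnalytic hΩ hf _

def firstCoordinate (Ω : Set E2) : analyticFunctionsOn Ω :=
  ((EuclideanSpace.proj 0 : E2 →L[ℝ] ℝ).analyticOnNhd Ω).restrictAnalytic

theorem partialDerivation_firstCoordinate (hΩ : IsOpen Ω) (i : Fin 2) :
    partialDerivation hΩ i (firstCoordinate Ω) = if i = 0 then 1 else 0 := by
  rw [firstCoordinate, partialDerivation, lineDerivation_restrictAnalytic_clm]
  fin_cases i <;> simp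

theorem coe_lameOp_restrictAnalytic (hΩ : IsOpen Ω) {w : E2 → Fin 2 → ℝ}
    (hw : ∀ j, AnalyticOnNhd ℝ (fun y => w y j) Ω) (μ lam : ℝ) (i : Fin 2) (x : Ω) :
    ((lameOp (partialDerivation hΩ) μ lam (fun j => (hw j).restrictAnalytic) i :
      analyticFunctionsOn Ω) : Ω → ℝ) x =
      lame μ lam w x i := by
  have hdiv : partialDerivation hΩ 0 (hw 0).restrictAnalytic
      + partialDerivation hΩ 1 (hw 1).restrictAnalytic
      = (((hw 0).pd 0).add ((hw 1).pd 1)).restrictAnalytic := by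
    simp only [partialDerivation_restrictAnalytic]; rfl
  simp only [lameOp, lapOp]
  rw [hdiv]
  simp only [partialDerivation_restrictAnalytic]
  rfl

theorem lameOp_restrictAnalytic_eq_zero_iff (hΩ : IsOpen Ω) {w : E2 → Fin 2 → ℝ}
    (hw : ∀ j, AnalyticOnNhd ℝ (fun y => w y j) Ω) (μ lam : ℝ) :
    lameOp (partialDerivation hΩ) μ lam (fun j => (hw j).restrictAnalytic) = 0 ↔
      ∀ x ∈ Ω, ∀ i, lame μ lam w x i = 0 := by
  refine ⟨fun h x hx i => ?_, fun h => ?_⟩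
  · rw [← coe_lameOp_restrictAnalytic hΩ hw μ lam i ⟨x, hx⟩, h]
    rfl
  · ext i x
    exact (coe_lameOp_restrictAnalytic hΩ hw μ lam i x).trans (h x x.2 i)

theorem coe_reflectionOp_restrictAnalytic (hΩ : IsOpen Ω) {u : E2 → Fin 2 → ℝ}
    (hu : ∀ j, AnalyticOnNhd ℝ (fun y => u y j) Ω) (c : ℝ) (x : Ω) (j : Fin 2) :
    ((reflectionOp (partialDerivation hΩ) c (firstCoordinate Ω) (fun j => (hu j).restrictAnalytic) j :
      analyticFunctionsOn Ω) : Ω → ℝ) x =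
      ![u x 0 + c * (x : E2) 0 ^ 2 * lap (fun y => u y 0) x
          + 2 * c * (x : E2) 0 * pd 1 (fun y => u y 1) x,
        -(u x 1) + c * (x : E2) 0 ^ 2 * lap (fun y => u y 1) x
          - 2 * c * (x : E2) 0 * pd 1 (fun y => u y 0) x] j := by
  fin_cases j <;>
  simp only [reflectionOp, firstCoordinate, EuclideanSpace.coe_proj, lapOp, lap,
    partialDerivation_restrictAnalytic, Fin.isValue, Fin.zero_eta, Fin.mk_one, Matrix.cons_val_zero,
    Matrix.cons_val_one, Matrix.cons_val_fin_one, AddSubgroupClass.coe_sub, AddMemClass.coe_add,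
    NegMemClass.coe_neg, SetLike.val_smul, MulMemClass.coe_mul, SubmonoidClass.coe_pow,
    Pi.sub_apply, Pi.add_apply, Pi.neg_apply, Pi.smul_apply, Pi.mul_apply, Pi.pow_apply,
    AnalyticOnNhd.coe_restrictAnalytic, smul_eq_mul] <;>
  ring

end LamePlane

theorem lame_reflection_same_bvp_general
    (μ lam c : ℝ) (hμ : 0 < μ) (hlam : 0 < lam + 2 * μ)
    (hc : c = (lam + μ) / (lam + 3 * μ))
    (Ω : Set E2) (hΩ : IsOpen Ω)
    (γ : Set E2)
    (hγ : ∃ p ∈ Ω ∩ {x : E2 | x 0 = 0},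
      γ = connectedComponentIn (Ω ∩ {x : E2 | x 0 = 0}) p)
    (u : E2 → Fin 2 → ℝ) (hu : AnalyticOnNhd ℝ u Ω)
    (hlame : ∀ x ∈ Ω, ∀ i : Fin 2, lame μ lam u x i = 0)
    (hbc : ∀ x ∈ γ, ∀ i : Fin 2, u x i = 0)
    (Dt : E2 → Fin 2 → ℝ)
    (hDt0 : ∀ x : E2,
      Dt x 0 = u x 0 + c * (x 0) ^ 2 * lap (fun y => u y 0) x
        + 2 * c * x 0 * pd 1 (fun y => u y 1) x)
    (hDt1 : ∀ x : E2,
      Dt x 1 = -(u x 1) + c * (x 0) ^ 2 * lap (fun y => u y 1) x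
        - 2 * c * x 0 * pd 1 (fun y => u y 0) x) :
    (∀ x ∈ Ω, ∀ i : Fin 2, lame μ lam Dt x i = 0) ∧
      (∀ x ∈ γ, ∀ i : Fin 2, Dt x i = 0) := by
  have hc' : c * (lam + 3 * μ) = lam + μ := by
    rw [hc]; exact div_mul_cancel₀ _ (by linarith)
  have hu' := analyticOnNhd_pi_iff.1 hu
  set U := fun j => (hu' j).restrictAnalytic
  have hDtU : ∀ j (x : Ω), ((reflectionOp (partialDerivation hΩ) c (firstCoordinate Ω) U j :
      analyticFunctionsOn Ω) : Ω → ℝ) x = Dt x j := fun j x =>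
    (coe_reflectionOp_restrictAnalytic hΩ hu' c x j).trans (by fin_cases j <;> simp [hDt0, hDt1])
  have hDt' j := analyticOnNhd_of_forall_coe_eq (g := fun y => Dt y j) hΩ _ (hDtU j)
  have hW : (fun j => (hDt' j).restrictAnalytic) =
      reflectionOp (partialDerivation hΩ) c (firstCoordinate Ω) U :=
    funext fun j => Subtype.ext (funext fun x => (hDtU j x).symm)
  refine ⟨(lameOp_restrictAnalytic_eq_zero_iff hΩ hDt' μ lam).1 ?_, fun x hx i => ?_⟩
  · rw [hW]
    exact lameOp_reflectionOp_eq_zero _ hc' (partialDerivation_firstCoordinate hΩ 0)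
      (partialDerivation_firstCoordinate hΩ 1) (lineDerivation_comm hΩ _ _)
      ((lameOp_restrictAnalytic_eq_zero_iff hΩ hu' μ lam).2 hlame)
  · obtain ⟨p, -, rfl⟩ := hγ
    have hx0 : x 0 = 0 := (connectedComponentIn_subset _ _ hx).2
    fin_cases i <;> simp [hDt0, hDt1, hbc x hx, hx0]

/-- If `u` is real-analytic on a connected open set `Ω` symmetric about `Γ = {x₁ = 0}`,
solves `𝓛₀u = 0` on `Ω` and vanishes on a connected component `γ` of `Ω ∩ Γ`, then
`D̃₀u(x) = (u₁(x), −u₂(x)) + c x₁² Δu(x) + 2c x₁ (∂₂u₂(x), −∂₂u₁(x))` solves the same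
boundary value problem: `𝓛₀(D̃₀u) = 0` on `Ω` and `D̃₀u = 0` on `γ`. -/
theorem lame_reflection_same_bvp
    (μ lam c : ℝ) (hμ : 0 < μ) (hlam : 0 < lam + 2 * μ)
    (hc : c = (lam + μ) / (lam + 3 * μ))
    (R : E2 → E2) (hR : ∀ x : E2, R x 0 = -(x 0) ∧ R x 1 = x 1)
    (Ω : Set E2) (hΩ : IsOpen Ω) (hconn : IsConnected Ω)
    (hsymm : R '' Ω = Ω)
    (γ : Set E2)
    (hγ : ∃ p ∈ Ω ∩ {x : E2 | x 0 = 0},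
      γ = connectedComponentIn (Ω ∩ {x : E2 | x 0 = 0}) p)
    (u : E2 → Fin 2 → ℝ) (hu : AnalyticOnNhd ℝ u Ω)
    (hlame : ∀ x ∈ Ω, ∀ i : Fin 2, lame μ lam u x i = 0)
    (hbc : ∀ x ∈ γ, ∀ i : Fin 2, u x i = 0)
    (Dt : E2 → Fin 2 → ℝ)
    (hDt0 : ∀ x : E2,
      Dt x 0 = u x 0 + c * (x 0) ^ 2 * lap (fun y => u y 0) x
        + 2 * c * x 0 * pd 1 (fun y => u y 1) x)
    (hDt1 : ∀ x : E2,
      Dt x 1 = -(u x 1) + c * (x 0) ^ 2 * lap (fun y => u y 1) x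
        - 2 * c * x 0 * pd 1 (fun y => u y 0) x) :
    (∀ x ∈ Ω, ∀ i : Fin 2, lame μ lam Dt x i = 0) ∧
      (∀ x ∈ γ, ∀ i : Fin 2, Dt x i = 0) :=
  lame_reflection_same_bvp_general μ lam c hμ hlam hc Ω hΩ γ hγ u hu hlame hbc Dt hDt0 hDt1
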